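/- arXiv:2603.12535 — 3 statements merged into one kernel-verified Lean document; each statement's English description precedes it below -/
import Mathlib

section
/- For every x ∈ {0,1}⁴ with x₁ = 0 and s ∈ {+1,−1}, one has Π_{Bb}(|ψ_s⟩_x ⊗ |φ⁺⟩_{ab}) = (1/√2)|Ψ_{s,x}⟩, and the 16 states |Ψ_{s,x}⟩ form an orthonormal family in (ℂ²)^{⊗4} ⊗ ℂ²_a ⊗ ℂ²_b. (Step 1 of the proof of Theorem 1: the measurement outcome M₁,₁ preserves orthogonality and occurs with nonzero probability on every GHZ basis state.) -/
/-!
`Π_{Bb}` is diagonal in the computational basis, so on `|y⟩ ⊗ |φ⁺⟩` it keeps exactly the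
ancilla term `|y_B y_B⟩`; the projection identity follows by linearity. Each `|Ψ_{s,x}⟩` is
`(e_p + s e_q)/√2` for two basis vectors, and because `x_A = 0` while `x̄_A = 1` the supports
`{p, q}` belonging to different `x` are disjoint, so the Gram matrix reduces to
`(1 + s t)/2 = δ_{st}`.
-/

noncomputable section

/-- View a coefficient function as a vector of the Euclidean (Hilbert) space. -/
def ofFun {ι : Type*} [Fintype ι] (f : ι → ℂ) : EuclideanSpace ℂ ι := WithLp.toLp 2 f

/-- Transport an endomorphism of the coefficient functions to the Euclidean space. -/
def toE {ι : Type*} [Fintype ι] (T : (ι → ℂ) →ₗ[ℂ] (ι → ℂ)) :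
    Module.End ℂ (EuclideanSpace ℂ ι) :=
  (WithLp.linearEquiv 2 ℂ (ι → ℂ)).symm.toLinearMap ∘ₗ T ∘ₗ
    (WithLp.linearEquiv 2 ℂ (ι → ℂ)).toLinearMap

open Classical in
/-- Diagonal orthogonal projection keeping exactly the basis vectors whose index
satisfies `f`. -/
def diagP {ι : Type*} [Fintype ι] (f : ι → Prop) : Module.End ℂ (EuclideanSpace ℂ ι) :=
  toE (LinearMap.pi fun i => (if f i then (1 : ℂ) else 0) • LinearMap.proj i)

/-- The linear map induced by a self-inverse permutation `σ` of the basis indices: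
it sends the basis vector `|x⟩` to `|σ x⟩`. -/
def permE {ι : Type*} [Fintype ι] (σ : ι → ι) : Module.End ℂ (EuclideanSpace ℂ ι) :=
  toE (LinearMap.funLeft ℂ ℂ σ)

/-- Tensor product of two vectors, realized on the product index set. -/
def tensE {ι κ : Type*} [Fintype ι] [Fintype κ]
    (u : EuclideanSpace ℂ ι) (w : EuclideanSpace ℂ κ) : EuclideanSpace ℂ (ι × κ) :=
  ofFun fun p => u p.1 * w p.2

/-- Bitwise complement of a bit string. -/
def bcompl {n : ℕ} (x : Fin n → Fin 2) : Fin n → Fin 2 := fun i => x i + 1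

/-- The sign `+1` or `−1`, indexed by a Boolean. -/
def sgn (s : Bool) : ℂ := if s then 1 else -1

/-- Computational basis vector `|x⟩` of the `n`-qubit space. -/
def ketQ {n : ℕ} (x : Fin n → Fin 2) : EuclideanSpace ℂ (Fin n → Fin 2) :=
  EuclideanSpace.single x 1

/-- The GHZ basis state `|ψ_s⟩_x = (|x⟩ + s|x̄⟩)/√2`. -/
def ghz {n : ℕ} (s : Bool) (x : Fin n → Fin 2) : EuclideanSpace ℂ (Fin n → Fin 2) :=
  (Real.sqrt 2 : ℂ)⁻¹ • (ketQ x + sgn s • ketQ (bcompl x))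

/-- The four main qubits `A,B,C,D` (positions `0,1,2,3`) together with the two
ancilla qubits `a,b` (positions `0,1` of the second factor). -/
abbrev K4 : Type := EuclideanSpace ℂ ((Fin 4 → Fin 2) × (Fin 2 → Fin 2))

/-- Basis vector of the two ancilla qubits `a, b`. -/
def ket2 (z : Fin 2 → Fin 2) : EuclideanSpace ℂ (Fin 2 → Fin 2) :=
  EuclideanSpace.single z 1

/-- The EPR state `|φ⁺⟩_{ab} = (|00⟩ + |11⟩)/√2` of the two ancilla qubits. -/
def phiPlus : EuclideanSpace ℂ (Fin 2 → Fin 2) :=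
  ofFun fun z => if z 0 = z 1 then (Real.sqrt 2 : ℂ)⁻¹ else 0

/-- The post-measurement state
`|Ψ_{s,x}⟩ = (|x⟩|x₂x₂⟩_{ab} + s|x̄⟩|x̄₂x̄₂⟩_{ab})/√2`. -/
def bigPsi (s : Bool) (x : Fin 4 → Fin 2) : K4 :=
  (Real.sqrt 2 : ℂ)⁻¹ •
    (tensE (ketQ x) (ket2 fun _ => x 1) +
      sgn s • tensE (ketQ (bcompl x)) (ket2 fun _ => x 1 + 1))

/-- The projection `Π_{Bb} = |00⟩⟨00| + |11⟩⟨11|` on the pair `(B, b)`. -/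
def projBb : Module.End ℂ K4 := diagP fun p => p.1 1 = p.2 1

/-- The projection `Π_{Aa} = |00⟩⟨00| + |11⟩⟨11|` on the pair `(A, a)`. -/
def projAa : Module.End ℂ K4 := diagP fun p => p.1 0 = p.2 0

/-- The projection `|0⟩⟨0|_A ⊗ I`. -/
def proj0A : Module.End ℂ K4 := diagP fun p => p.1 0 = 0

/-- The CNOT gate with control the main qubit at position `c` and target the main
qubit `A` (position `0`), acting as the identity on the ancillas. -/
def cnotK (c : Fin 4) : Module.End ℂ K4 :=
  permE fun p => (Function.update p.1 0 (p.1 0 + p.1 c), p.2)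

open scoped InnerProductSpace

lemma ofReal_inv_sqrt_two_mul_self :
    ((Real.sqrt 2 : ℂ))⁻¹ * ((Real.sqrt 2 : ℂ))⁻¹ = 2⁻¹ := by
  rw [← mul_inv, ← Complex.ofReal_mul, Real.mul_self_sqrt zero_le_two, Complex.ofReal_ofNat]

lemma conj_sgn (s : Bool) : starRingEnd ℂ (sgn s) = sgn s := by
  cases s <;> simp [sgn]

lemma one_add_sgn_mul_sgn (s t : Bool) : 1 + sgn s * sgn t = if s = t then 2 else 0 := by
  cases s <;> cases t <;> norm_num [sgn]

theorem Orthonormal.sqrt_two_inv_smul_add_sgn_smul {E ι κ : Type*} [NormedAddCommGroup E]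
    [InnerProductSpace ℂ E] {e : κ → E} (he : Orthonormal ℂ e) {p q : ι → κ}
    (hp : p.Injective) (hq : q.Injective) (hpq : ∀ i j, p i ≠ q j) :
    Orthonormal ℂ fun r : Bool × ι =>
      (Real.sqrt 2 : ℂ)⁻¹ • (e (p r.2) + sgn r.1 • e (q r.2)) := by
  classical
  rw [orthonormal_iff_ite] at he ⊢
  rintro ⟨s, i⟩ ⟨t, j⟩
  simp only [inner_smul_left, inner_smul_right, inner_add_left, inner_add_right, he,
    hp.eq_iff, hq.eq_iff, hpq, (hpq _ _).symm, if_false, map_inv₀, Complex.conj_ofReal,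
    conj_sgn, Prod.mk.injEq]
  by_cases hij : i = j
  · subst hij
    simp only [if_true, and_true]
    calc _ = (Real.sqrt 2 : ℂ)⁻¹ * (Real.sqrt 2 : ℂ)⁻¹ * (1 + sgn s * sgn t) := by ring
      _ = if s = t then 1 else 0 := by
        rw [ofReal_inv_sqrt_two_mul_self, one_add_sgn_mul_sgn]
        split_ifs <;> norm_num
  · simp [hij]

open Classical in
lemma diagP_apply {ι : Type*} [Fintype ι] (f : ι → Prop) (v : EuclideanSpace ℂ ι) (i : ι) :
    diagP f v i = if f i then v i else 0 := by
  by_cases h : f i <;> simp [diagP, toE, h]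

lemma tensE_apply {ι κ : Type*} [Fintype ι] [Fintype κ]
    (u : EuclideanSpace ℂ ι) (w : EuclideanSpace ℂ κ) (p : ι × κ) :
    tensE u w p = u p.1 * w p.2 := rfl

lemma tensE_add_left {ι κ : Type*} [Fintype ι] [Fintype κ]
    (u u' : EuclideanSpace ℂ ι) (w : EuclideanSpace ℂ κ) :
    tensE (u + u') w = tensE u w + tensE u' w := by
  ext p
  simp [tensE_apply, add_mul]

lemma tensE_smul_left {ι κ : Type*} [Fintype ι] [Fintype κ]
    (c : ℂ) (u : EuclideanSpace ℂ ι) (w : EuclideanSpace ℂ κ) :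
    tensE (c • u) w = c • tensE u w := by
  ext p
  simp [tensE_apply, mul_assoc]

lemma tensE_single_one {ι κ : Type*} [Fintype ι] [Fintype κ] [DecidableEq ι] [DecidableEq κ]
    (i : ι) (k : κ) :
    tensE (EuclideanSpace.single i (1 : ℂ)) (EuclideanSpace.single k 1)
      = EuclideanSpace.single (i, k) 1 := by
  ext ⟨i', k'⟩
  by_cases hi : i' = i <;> by_cases hk : k' = k <;> simp [tensE_apply, hi, hk]

lemma bcompl_apply {n : ℕ} (x : Fin n → Fin 2) (i : Fin n) : bcompl x i = x i + 1 := rfl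

lemma ket2_const_apply (c : Fin 2) (z : Fin 2 → Fin 2) :
    ket2 (fun _ => c) z = if z 0 = c ∧ z 1 = c then 1 else 0 := by
  simp [ket2, PiLp.single_apply, funext_iff, Fin.forall_fin_two]

lemma projBb_tensE_ketQ_phiPlus (y : Fin 4 → Fin 2) :
    projBb (tensE (ketQ y) phiPlus) =
      (Real.sqrt 2 : ℂ)⁻¹ • tensE (ketQ y) (ket2 fun _ => y 1) := by
  ext ⟨a, z⟩
  rw [projBb, diagP_apply]
  by_cases ha : a = y
  · subst ha
    simp only [tensE_apply, PiLp.smul_apply, smul_eq_mul, ketQ, PiLp.single_apply, if_true,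
      one_mul, ket2_const_apply, phiPlus, ofFun]
    by_cases h1 : a 1 = z 1
    · simp [h1]
    · simp [h1, Ne.symm h1]
  · simp [tensE_apply, ketQ, ha]

lemma projBb_tensE_ghz_phiPlus (s : Bool) (x : Fin 4 → Fin 2) :
    projBb (tensE (ghz s x) phiPlus) = (Real.sqrt 2 : ℂ)⁻¹ • bigPsi s x := by
  rw [ghz, tensE_smul_left, tensE_add_left, tensE_smul_left, map_smul, map_add, map_smul,
    projBb_tensE_ketQ_phiPlus, projBb_tensE_ketQ_phiPlus, bigPsi]
  simp only [bcompl_apply]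
  module

lemma bigPsi_eq_single (s : Bool) (x : Fin 4 → Fin 2) :
    bigPsi s x = (Real.sqrt 2 : ℂ)⁻¹ • (EuclideanSpace.single (x, fun _ => x 1) 1 +
      sgn s • EuclideanSpace.single (bcompl x, fun _ => x 1 + 1) 1) := by
  rw [bigPsi, ketQ, ketQ, ket2, ket2, tensE_single_one, tensE_single_one]

/-- Step 1 of Theorem 1: `Π_{Bb}(|ψ_s⟩_x ⊗ |φ⁺⟩_{ab}) = (1/√2)|Ψ_{s,x}⟩`,
and the 16 states `|Ψ_{s,x}⟩` form an orthonormal family. -/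
theorem thm1_step1_orthogonality_preserving :
    (∀ (s : Bool) (x : Fin 4 → Fin 2), x 0 = 0 →
      projBb (tensE (ghz s x) phiPlus) = (Real.sqrt 2 : ℂ)⁻¹ • bigPsi s x) ∧
    Orthonormal ℂ (fun p : Bool × {x : Fin 4 → Fin 2 // x 0 = 0} => bigPsi p.1 p.2.1) := by
  refine ⟨fun s x _ => projBb_tensE_ghz_phiPlus s x, ?_⟩
  let p (x : {x : Fin 4 → Fin 2 // x 0 = 0}) : (Fin 4 → Fin 2) × (Fin 2 → Fin 2) :=
    (x.1, fun _ => x.1 1)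
  let q (x : {x : Fin 4 → Fin 2 // x 0 = 0}) : (Fin 4 → Fin 2) × (Fin 2 → Fin 2) :=
    (bcompl x.1, fun _ => x.1 1 + 1)
  have hp : p.Injective := fun x y h => Subtype.ext (Prod.ext_iff.mp h).1
  have hq : q.Injective := fun x y h =>
    Subtype.ext (funext fun i => add_right_cancel (congrFun (Prod.ext_iff.mp h).1 i))
  have hpq : ∀ x y, p x ≠ q y := by
    intro x y h
    have h0 := congrFun (Prod.ext_iff.mp h).1 0
    simp [p, q, bcompl_apply, x.2, y.2] at h0
  simpa only [bigPsi_eq_single] using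
    (EuclideanSpace.orthonormal_single (𝕜 := ℂ)).sqrt_two_inv_smul_add_sgn_smul hp hq hpq
end
end

section
/- For every x ∈ {0,1}⁴ with x₁ = 0 and s ∈ {+1,−1}: the projection Π_{Aa} applied to CNOT_{4→1}CNOT_{3→1}|Ψ_{s,x}⟩ equals CNOT_{4→1}CNOT_{3→1}|Ψ_{s,x}⟩ if x₁ ⊕ x₃ ⊕ x₄ = x₂, and equals 0 otherwise. (Steps 5–6 of the proof of Theorem 1: after the second CNOT with control D and target A, Alice's measurement M₄ has a deterministic outcome determined by x₁ ⊕ x₂ ⊕ x₃ ⊕ x₄.) -/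
/-
Both branches of `|Ψ_{s,x}⟩` are computational basis states, and each is the complement of the
other on all six qubits. The two CNOTs permute basis states and, having two controls on the same
target, commute with global complementation; so afterwards both branches are still complementary,
with A-bit `x₁ ⊕ x₃ ⊕ x₄` and a-bit `x₂`. The condition `A = a` defining `Π_{Aa}` is invariant
under complementing both bits, so `Π_{Aa}` keeps or kills the two branches together.
-/

noncomputable section

section Basis

variable {ι κ : Type*} [Fintype ι] [DecidableEq ι]

lemma permE_single {σ : ι → ι} (hσ : Function.Involutive σ) (q : ι) (a : ℂ) :
    permE σ (EuclideanSpace.single q a) = EuclideanSpace.single (σ q) a := by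
  ext p
  change (EuclideanSpace.single q a) (σ p) = (EuclideanSpace.single (σ q) a) p
  simp only [PiLp.single_apply, hσ.eq_iff.symm]

lemma diagP_single_of_pos {f : ι → Prop} {q : ι} (hq : f q) (a : ℂ) :
    diagP f (EuclideanSpace.single q a) = EuclideanSpace.single q a := by
  ext p
  classical
  change (if f p then (1 : ℂ) else 0) * (EuclideanSpace.single q a) p = _
  by_cases hp : p = q
  · subst hp; simp [hq]
  · simp [hp]

lemma diagP_single_of_neg {f : ι → Prop} {q : ι} (hq : ¬ f q) (a : ℂ) :
    diagP f (EuclideanSpace.single q a) = 0 := by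
  ext p
  classical
  change (if f p then (1 : ℂ) else 0) * (EuclideanSpace.single q a) p = 0
  by_cases hp : p = q
  · subst hp; simp [hq]
  · simp [hp]

lemma tensE_single [Fintype κ] [DecidableEq κ] (i : ι) (k : κ) (a b : ℂ) :
    tensE (EuclideanSpace.single i a) (EuclideanSpace.single k b) =
      EuclideanSpace.single (i, k) (a * b) := by
  ext ⟨i', k'⟩
  change (EuclideanSpace.single i a) i' * (EuclideanSpace.single k b) k' = _
  by_cases hi : i' = i <;> by_cases hk : k' = k <;> simp [PiLp.single_apply, hi, hk]

end Basis

lemma cnotK_single {c : Fin 4} (hc : c ≠ 0) (y : Fin 4 → Fin 2) (z : Fin 2 → Fin 2)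
    (a : ℂ) :
    cnotK c (EuclideanSpace.single (y, z) a) =
      EuclideanSpace.single (Function.update y 0 (y 0 + y c), z) a := by
  refine permE_single (fun p => Prod.ext ?_ rfl) _ _
  have hbit : ∀ u v : Fin 2, u + v + v = u := by decide
  simp only [Function.update_self, Function.update_of_ne hc, Function.update_idem, hbit,
    Function.update_eq_self]

def catState (s : Bool) (y : Fin 4 → Fin 2) (z : Fin 2 → Fin 2) : K4 :=
  (Real.sqrt 2 : ℂ)⁻¹ •
    (EuclideanSpace.single (y, z) 1 + sgn s • EuclideanSpace.single (bcompl y, bcompl z) 1)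

lemma bigPsi_eq_catState (s : Bool) (x : Fin 4 → Fin 2) :
    bigPsi s x = catState s x fun _ => x 1 := by
  simp only [bigPsi, catState, ketQ, ket2, tensE_single, mul_one]
  rfl

/-- Complementing flips the three summands of `A ⊕ C ⊕ D`, which flips the sum once. -/
lemma update_bcompl_parity (y : Fin 4 → Fin 2) :
    Function.update (bcompl y) 0 (bcompl y 0 + bcompl y 2 + bcompl y 3) =
      bcompl (Function.update y 0 (y 0 + y 2 + y 3)) := by
  have hbit : ∀ u v w : Fin 2, u + 1 + (v + 1) + (w + 1) = u + v + w + 1 := by decide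
  funext i
  by_cases hi : i = 0
  · subst hi; simp [bcompl, hbit]
  · simp [bcompl, Function.update_of_ne hi]

lemma cnotK_three_cnotK_two_single (y : Fin 4 → Fin 2) (z : Fin 2 → Fin 2) (a : ℂ) :
    cnotK 3 (cnotK 2 (EuclideanSpace.single (y, z) a)) =
      EuclideanSpace.single (Function.update y 0 (y 0 + y 2 + y 3), z) a := by
  rw [cnotK_single (by decide), cnotK_single (by decide)]
  simp only [Function.update_self, Function.update_of_ne (show (3 : Fin 4) ≠ 0 by decide),
    Function.update_idem]

lemma cnotK_three_cnotK_two_catState (s : Bool) (y : Fin 4 → Fin 2) (z : Fin 2 → Fin 2) :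
    cnotK 3 (cnotK 2 (catState s y z)) =
      catState s (Function.update y 0 (y 0 + y 2 + y 3)) z := by
  simp only [catState, map_smul, map_add, cnotK_three_cnotK_two_single, update_bcompl_parity]

lemma projAa_single_of_eq {q : (Fin 4 → Fin 2) × (Fin 2 → Fin 2)} (h : q.1 0 = q.2 0)
    (a : ℂ) :
    projAa (EuclideanSpace.single q a) = EuclideanSpace.single q a :=
  diagP_single_of_pos (f := fun p : (Fin 4 → Fin 2) × (Fin 2 → Fin 2) => p.1 0 = p.2 0) h a

lemma projAa_single_of_ne {q : (Fin 4 → Fin 2) × (Fin 2 → Fin 2)} (h : q.1 0 ≠ q.2 0)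
    (a : ℂ) :
    projAa (EuclideanSpace.single q a) = 0 :=
  diagP_single_of_neg (f := fun p : (Fin 4 → Fin 2) × (Fin 2 → Fin 2) => p.1 0 = p.2 0) h a

lemma projAa_catState_of_eq {s : Bool} {y : Fin 4 → Fin 2} {z : Fin 2 → Fin 2}
    (h : y 0 = z 0) : projAa (catState s y z) = catState s y z := by
  have hc : bcompl y 0 = bcompl z 0 := congrArg (· + 1) h
  simp only [catState, map_smul, map_add, projAa_single_of_eq (q := (y, z)) h,
    projAa_single_of_eq (q := (bcompl y, bcompl z)) hc]

lemma projAa_catState_of_ne {s : Bool} {y : Fin 4 → Fin 2} {z : Fin 2 → Fin 2}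
    (h : y 0 ≠ z 0) : projAa (catState s y z) = 0 := by
  have hc : bcompl y 0 ≠ bcompl z 0 := fun hc => h (add_right_cancel hc)
  simp only [catState, map_smul, map_add, projAa_single_of_ne (q := (y, z)) h,
    projAa_single_of_ne (q := (bcompl y, bcompl z)) hc, smul_zero, add_zero]

/-- Steps 5–6 of Theorem 1: after the second CNOT, with control `D`
and target `A`, the projection `Π_{Aa}` fixes `CNOT_{4→1}CNOT_{3→1}|Ψ_{s,x}⟩` if
`x₁ ⊕ x₃ ⊕ x₄ = x₂`, and annihilates it otherwise. -/
theorem thm1_steps56_deterministic_outcome :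
    ∀ (s : Bool) (x : Fin 4 → Fin 2), x 0 = 0 →
      (x 0 + x 2 + x 3 = x 1 →
        projAa (cnotK 3 (cnotK 2 (bigPsi s x))) = cnotK 3 (cnotK 2 (bigPsi s x))) ∧
      (x 0 + x 2 + x 3 ≠ x 1 →
        projAa (cnotK 3 (cnotK 2 (bigPsi s x))) = 0) := by
  intro s x _
  rw [bigPsi_eq_catState, cnotK_three_cnotK_two_catState]
  have hA : Function.update x 0 (x 0 + x 2 + x 3) 0 = x 0 + x 2 + x 3 := Function.update_self ..
  exact ⟨fun h => projAa_catState_of_eq (hA.trans h), fun h => projAa_catState_of_ne (hA ▸ h)⟩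
end
end

section
/- All the states of set (5) are nonzero and pairwise orthogonal: any two distinct states drawn from the union H₁ ∪ H₂ ∪ … ∪ H₁₀ (including two distinct states from the same family) have inner product zero in (ℂ^d)^{⊗5}. -/
noncomputable section

/-- The root of unity `ω_n = e^{2πi/n}`. -/
def omegaC (n : ℕ) : ℂ := Complex.exp (2 * Real.pi * Complex.I / n)

/-- Computational basis vector `|k⟩` of `ℂ^d`. -/
def ketD (d k : ℕ) : EuclideanSpace ℂ (Fin d) :=
  ofFun fun u => if (u : ℕ) = k then 1 else 0

/-- The (unnormalized) vector `|α_i⟩ = Σ_{u=0}^{d−1} ω_d^{iu}|u⟩`. -/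
def alphaD (d i : ℕ) : EuclideanSpace ℂ (Fin d) :=
  ofFun fun u => omegaC d ^ (i * (u : ℕ))

/-- The (unnormalized) vector `|γ_m⟩ = Σ_{u=0}^{d−2} ω_{d−1}^{mu}|u+1⟩`. -/
def gammaD (d m : ℕ) : EuclideanSpace ℂ (Fin d) :=
  ofFun fun u => if (u : ℕ) = 0 then 0 else omegaC (d - 1) ^ (m * ((u : ℕ) - 1))

/-- Tensor product of five vectors of `ℂ^d`, realized on the index set `Fin 5 → Fin d`. -/
def tp5 {d : ℕ} (v0 v1 v2 v3 v4 : EuclideanSpace ℂ (Fin d)) :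
    EuclideanSpace ℂ (Fin 5 → Fin d) :=
  ofFun fun x => v0 (x 0) * v1 (x 1) * v2 (x 2) * v3 (x 3) * v4 (x 4)

/-- The states of set (5): family `k : Fin 10` corresponds to `H_{k+1}`; the parameter
`a` is the spectral parameter (`i ∈ ℤ_d` for `H₁,…,H₅`, `m ∈ ℤ_{d−1}` for `H₆,…,H₁₀`),
and `p` is the index of the computational basis vector `|p⟩ ∈ {|1⟩,…,|d−1⟩}`. -/
def stateOf (d : ℕ) (k : Fin 10) (a p : ℕ) : EuclideanSpace ℂ (Fin 5 → Fin d) :=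
  if k = 0 then tp5 (alphaD d a) (alphaD d a) (ketD d p) (ketD d 0) (ketD d 0)
  else if k = 1 then tp5 (alphaD d a) (ketD d p) (ketD d 0) (ketD d 0) (alphaD d a)
  else if k = 2 then tp5 (ketD d p) (ketD d 0) (ketD d 0) (alphaD d a) (alphaD d a)
  else if k = 3 then tp5 (ketD d 0) (ketD d 0) (alphaD d a) (alphaD d a) (ketD d p)
  else if k = 4 then tp5 (ketD d 0) (alphaD d a) (alphaD d a) (ketD d p) (ketD d 0)
  else if k = 5 then tp5 (gammaD d a) (ketD d 0) (ketD d p) (ketD d 0) (ketD d 1)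
  else if k = 6 then tp5 (ketD d 0) (ketD d p) (ketD d 0) (ketD d 1) (gammaD d a)
  else if k = 7 then tp5 (ketD d p) (ketD d 0) (ketD d 1) (gammaD d a) (ketD d 0)
  else if k = 8 then tp5 (ketD d 0) (ketD d 1) (gammaD d a) (ketD d 0) (ketD d p)
  else tp5 (ketD d 1) (gammaD d a) (ketD d 0) (ketD d p) (ketD d 0)

/-- Ranges of the parameters of the states of set (5). -/
def validIdx (d : ℕ) (k : Fin 10) (a p : ℕ) : Prop :=
  (if (k : ℕ) < 5 then a < d else a < d - 1) ∧ 1 ≤ p ∧ p < d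

/-! Every state is an elementary tensor, so inner products factor slot by slot. Two states of
the same family differ either in their basis vector `|p⟩` or in the index of `|α_i⟩`/`|γ_m⟩`,
and distinct Fourier vectors are orthogonal because a nontrivial root of unity has vanishing
geometric sum. Two states of different families always have, in some slot, `|0⟩` facing
`|p⟩`, `|1⟩` or `|γ_m⟩`, all orthogonal to `|0⟩`. -/

open Finset ComplexConjugate

lemma inner_ofFun {ι : Type*} [Fintype ι] (f g : ι → ℂ) :
    inner ℂ (ofFun f) (ofFun g) = ∑ u, conj (f u) * g u := by
  simp [ofFun, PiLp.inner_apply, mul_comm]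

lemma IsPrimitiveRoot.sum_conj_pow_mul_pow {ζ : ℂ} {n : ℕ} (hζ : IsPrimitiveRoot ζ n)
    {i j : ℕ} (hi : i < n) (hj : j < n) :
    ∑ u ∈ range n, conj (ζ ^ (i * u)) * ζ ^ (j * u) = if i = j then (n : ℂ) else 0 := by
  have hconj : conj ζ = ζ⁻¹ := (Complex.inv_eq_conj (hζ.norm'_eq_one (by omega))).symm
  have hterm : ∀ u, conj (ζ ^ (i * u)) * ζ ^ (j * u) = ((ζ ^ i)⁻¹ * ζ ^ j) ^ u := by
    intro u
    simp only [map_pow, hconj, mul_pow, inv_pow, ← pow_mul]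
  simp only [hterm]
  split_ifs with hij
  · subst hij
    simp [hζ.ne_zero (by omega)]
  · have hne : (ζ ^ i)⁻¹ * ζ ^ j ≠ 1 := by
      rw [Ne, inv_mul_eq_one₀ (pow_ne_zero _ (hζ.ne_zero (by omega)))]
      exact fun h => hij (hζ.pow_inj hi hj h)
    have hpow : ((ζ ^ i)⁻¹ * ζ ^ j) ^ n = 1 := by
      rw [mul_pow, inv_pow, ← pow_mul, ← pow_mul, mul_comm i, mul_comm j, pow_mul, pow_mul,
        hζ.pow_eq_one, one_pow, one_pow, inv_one, one_mul]
    rw [geom_sum_eq hne, hpow, sub_self, zero_div]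

lemma isPrimitiveRoot_omegaC {n : ℕ} (hn : 0 < n) : IsPrimitiveRoot (omegaC n) n :=
  Complex.isPrimitiveRoot_exp n hn.ne'

lemma inner_ketD (d p q : ℕ) :
    inner ℂ (ketD d p) (ketD d q) = if p = q ∧ p < d then (1 : ℂ) else 0 := by
  rw [ketD, ketD, inner_ofFun]
  split_ifs with h
  · obtain ⟨rfl, hp⟩ := h
    rw [Fintype.sum_eq_single ⟨p, hp⟩] <;> simp +contextual [Fin.ext_iff]
  · refine Finset.sum_eq_zero fun u _ => ?_
    have : ¬((u : ℕ) = p ∧ (u : ℕ) = q) := fun ⟨hup, huq⟩ => h ⟨hup ▸ huq, hup ▸ u.isLt⟩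
    split_ifs <;> simp_all

lemma inner_alphaD {d i j : ℕ} (hi : i < d) (hj : j < d) :
    inner ℂ (alphaD d i) (alphaD d j) = if i = j then (d : ℂ) else 0 := by
  rw [alphaD, alphaD, inner_ofFun, Fin.sum_univ_eq_sum_range
    (fun u => conj (omegaC d ^ (i * u)) * omegaC d ^ (j * u))]
  exact (isPrimitiveRoot_omegaC (by omega)).sum_conj_pow_mul_pow hi hj

lemma inner_gammaD {d m m' : ℕ} (hm : m < d - 1) (hm' : m' < d - 1) :
    inner ℂ (gammaD d m) (gammaD d m') = if m = m' then ((d - 1 : ℕ) : ℂ) else 0 := by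
  obtain ⟨e, rfl⟩ : ∃ e, d = e + 1 := ⟨d - 1, by omega⟩
  rw [gammaD, gammaD, inner_ofFun, Fin.sum_univ_succ]
  simp only [Fin.val_zero, Fin.val_succ, if_true, Nat.add_one_ne_zero, if_false,
    Nat.add_sub_cancel, map_zero, zero_mul, zero_add]
  rw [Fin.sum_univ_eq_sum_range (fun u => conj (omegaC e ^ (m * u)) * omegaC e ^ (m' * u))]
  exact (isPrimitiveRoot_omegaC (by omega)).sum_conj_pow_mul_pow (by omega) (by omega)

lemma inner_ketD_zero_gammaD (d m : ℕ) : inner ℂ (ketD d 0) (gammaD d m) = 0 := by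
  rw [ketD, gammaD, inner_ofFun]
  exact Finset.sum_eq_zero fun u _ => by split_ifs <;> simp_all

lemma inner_gammaD_ketD_zero (d m : ℕ) : inner ℂ (gammaD d m) (ketD d 0) = 0 := by
  rw [ketD, gammaD, inner_ofFun]
  exact Finset.sum_eq_zero fun u _ => by split_ifs <;> simp_all

lemma inner_tp5 {d : ℕ} (v₀ v₁ v₂ v₃ v₄ w₀ w₁ w₂ w₃ w₄ : EuclideanSpace ℂ (Fin d)) :
    inner ℂ (tp5 v₀ v₁ v₂ v₃ v₄) (tp5 w₀ w₁ w₂ w₃ w₄) =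
      inner ℂ v₀ w₀ * inner ℂ v₁ w₁ * inner ℂ v₂ w₂ * inner ℂ v₃ w₃ * inner ℂ v₄ w₄ := by
  have hprod := Fintype.prod_sum fun j (u : Fin d) =>
    conj (![v₀, v₁, v₂, v₃, v₄] j u) * ![w₀, w₁, w₂, w₃, w₄] j u
  simp only [Fin.prod_univ_five, Matrix.cons_val_zero, Matrix.cons_val_one, Matrix.cons_val_two,
    Matrix.cons_val_three, Matrix.cons_val_four, Matrix.head_cons, Matrix.tail_cons] at hprod
  rw [tp5, tp5, inner_ofFun]
  simp only [PiLp.inner_apply, RCLike.inner_apply', hprod]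
  refine Finset.sum_congr rfl fun x _ => ?_
  simp only [map_mul]
  ring

lemma stateOf_ne_zero {d : ℕ} {k : Fin 10} {a p : ℕ} (h : validIdx d k a p) :
    stateOf d k a p ≠ 0 := by
  obtain ⟨ha, hp, hpd⟩ := h
  refine (inner_self_ne_zero (𝕜 := ℂ)).1 ?_
  have h0 : 0 < d := by omega
  have h1 : 1 < d := by omega
  have hd : d ≠ 0 := by omega
  have hd' : (d : ℂ) - 1 ≠ 0 := sub_ne_zero.2 (by exact_mod_cast h1.ne')
  -- without the erasure, simp would rewrite `⟪s, s⟫` as `‖s‖ ^ 2` before unfolding `s`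
  fin_cases k <;> simp at ha <;>
    simp [stateOf, inner_tp5, inner_ketD, inner_alphaD, inner_gammaD, ha, h0, h1, hd, hd', hpd,
      -inner_self_eq_norm_sq_to_K]

lemma inner_stateOf_of_family_ne {d : ℕ} {k k' : Fin 10} {a p a' p' : ℕ}
    (h : validIdx d k a p) (h' : validIdx d k' a' p') (hk : k ≠ k') :
    inner ℂ (stateOf d k a p) (stateOf d k' a' p') = 0 := by
  have hp : p ≠ 0 := by have := h.2.1; omega
  have hp' : p' ≠ 0 := by have := h'.2.1; omega
  fin_cases k <;> fin_cases k' <;>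
    simp [stateOf, inner_tp5, inner_ketD, inner_ketD_zero_gammaD, inner_gammaD_ketD_zero, hp,
      hp'.symm] at hk ⊢

lemma inner_stateOf_of_params_ne {d : ℕ} {k : Fin 10} {a p a' p' : ℕ}
    (h : validIdx d k a p) (h' : validIdx d k a' p') (hne : (a, p) ≠ (a', p')) :
    inner ℂ (stateOf d k a p) (stateOf d k a' p') = 0 := by
  obtain ⟨ha, -, -⟩ := h
  obtain ⟨ha', -, -⟩ := h'
  rcases eq_or_ne a a' with rfl | haa
  · have hpp : p ≠ p' := fun hpp => hne (hpp ▸ rfl)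
    fin_cases k <;> simp [stateOf, inner_tp5, inner_ketD, hpp]
  · fin_cases k <;> simp_all [stateOf, inner_tp5, inner_alphaD, inner_gammaD]

theorem set5_nonzero_pairwise_orthogonal_general (d : ℕ) :
    (∀ (k : Fin 10) (a p : ℕ), validIdx d k a p → stateOf d k a p ≠ 0) ∧
    (∀ (k k' : Fin 10) (a p a' p' : ℕ), validIdx d k a p → validIdx d k' a' p' →
      (k, a, p) ≠ (k', a', p') →
      (inner ℂ (stateOf d k a p) (stateOf d k' a' p') : ℂ) = 0) := by
  refine ⟨fun k a p h => stateOf_ne_zero h, fun k k' a p a' p' h h' hne => ?_⟩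
  rcases eq_or_ne k k' with rfl | hk
  · exact inner_stateOf_of_params_ne h h' fun hap => hne (congrArg (Prod.mk k) hap)
  · exact inner_stateOf_of_family_ne h h' hk

/-- All the states of set (5) are nonzero and pairwise orthogonal. -/
theorem set5_nonzero_pairwise_orthogonal (d : ℕ) (hd : 3 ≤ d) :
    (∀ (k : Fin 10) (a p : ℕ), validIdx d k a p → stateOf d k a p ≠ 0) ∧
    (∀ (k k' : Fin 10) (a p a' p' : ℕ), validIdx d k a p → validIdx d k' a' p' →
      (k, a, p) ≠ (k', a', p') →
      (inner ℂ (stateOf d k a p) (stateOf d k' a' p') : ℂ) = 0) :=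
  set5_nonzero_pairwise_orthogonal_general d
end
end
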